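/- arXiv:2304.11912 — 3 statements merged into one kernel-verified Lean document; each statement's English description precedes it below -/
import Mathlib

section
/- For K ≥ 1 users with channel gains a_1, ..., a_K > 0 and total power P > 0, the function (p_1,...,p_K) ↦ ∑_{k=1}^K log₂(1 + p_k a_k / (a_k ∑_{u≠k} p_u + 1)), maximized over p_k ≥ 0 with ∑_k p_k = P, attains its maximum at the allocation that assigns all power P to a user k* with a_{k*} = max_k a_k, and the maximum value is log₂(1 + P · max_k a_k). -/
open Finset

/-- Single-slot opportunistic time sharing: the sum rate
`∑ₖ log₂(1 + pₖ aₖ / (aₖ ∑_{u≠k} pᵤ + 1))` over nonnegative powers summing to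
`P` is maximized by giving all power to a user with the largest gain, and the
maximum value is `log₂ (1 + P maxₖ aₖ)`. -/
theorem opportunistic_time_sharing (K : ℕ) (hK : 0 < K) (a : Fin K → ℝ)
    (ha : ∀ k, 0 < a k) (P : ℝ) (hP : 0 < P) (kstar : Fin K)
    (hstar : ∀ k, a k ≤ a kstar) :
    (∀ p : Fin K → ℝ, (∀ k, 0 ≤ p k) → ∑ k, p k = P →
      ∑ k, Real.logb 2
          (1 + p k * a k / (a k * ∑ u ∈ Finset.univ.erase k, p u + 1))
        ≤ Real.logb 2 (1 + P * a kstar)) ∧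
    ∑ k, Real.logb 2
        (1 + (if k = kstar then P else 0) * a k /
          (a k * ∑ u ∈ Finset.univ.erase k, (if u = kstar then P else 0) + 1))
      = Real.logb 2 (1 + P * a kstar) := by
  have hA : 0 < a kstar := ha kstar
  constructor
  · intro p hp hsum
    -- tail sums
    set S : ℕ → ℝ := fun n => ∑ u ∈ Finset.univ.filter (fun u : Fin K => n ≤ u.val), p u with hSdef
    have hS0 : S 0 = P := by
      simp only [hSdef, Nat.zero_le, Finset.filter_true_of_mem, fun u _ => Nat.zero_le _]
      simpa using hsum
    have hSK : S K = 0 := by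
      apply Finset.sum_eq_zero
      intro u hu
      simp only [Finset.mem_filter] at hu
      exact absurd hu.2 (by omega)
    have hSnn : ∀ n, 0 ≤ S n := fun n => Finset.sum_nonneg fun u _ => hp u
    have hstep : ∀ k : Fin K, S k.val = p k + S (k.val + 1) := by
      intro k
      have hins : Finset.univ.filter (fun u : Fin K => k.val ≤ u.val)
          = insert k (Finset.univ.filter (fun u : Fin K => k.val + 1 ≤ u.val)) := by
        ext u
        simp only [Finset.mem_filter, Finset.mem_univ, true_and, Finset.mem_insert]
        constructor
        · intro h
          rcases eq_or_lt_of_le h with h' | h'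
          · left; exact (Fin.ext h'.symm)
          · right; omega
        · rintro (rfl | h) <;> omega
      have hnot : k ∉ Finset.univ.filter (fun u : Fin K => k.val + 1 ≤ u.val) := by
        simp
      simp only [hSdef, hins, Finset.sum_insert hnot]
    -- the telescoping upper bound function
    set g : ℕ → ℝ := fun n => Real.logb 2 (a kstar * S n + 1) with hgdef
    have hterm : ∀ k : Fin K,
        Real.logb 2 (1 + p k * a k / (a k * ∑ u ∈ Finset.univ.erase k, p u + 1))
          ≤ g k.val - g (k.val + 1) := by
      intro k
      set s := S (k.val + 1) with hs
      have hsnn : 0 ≤ s := hSnn _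
      set E := ∑ u ∈ Finset.univ.erase k, p u with hE
      have hEnn : 0 ≤ E := Finset.sum_nonneg fun u _ => hp u
      have hsE : s ≤ E := by
        apply Finset.sum_le_sum_of_subset_of_nonneg
        · intro u hu
          simp only [Finset.mem_filter, Finset.mem_univ, true_and] at hu
          simp only [Finset.mem_erase, Finset.mem_univ, and_true]
          intro h; rw [h] at hu; omega
        · intro u _ _; exact hp u
      have hak : 0 < a k := ha k
      have hd1 : 0 < a k * E + 1 := by positivity
      have hd2 : 0 < a k * s + 1 := by positivity
      have hd3 : 0 < a kstar * s + 1 := by positivity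
      have hpk : 0 ≤ p k := hp k
      have ht : S k.val = p k + s := hstep k
      have hd4 : 0 < a kstar * S k.val + 1 := by rw [ht]; positivity
      -- step 1: less interference
      have h1 : 1 + p k * a k / (a k * E + 1) ≤ 1 + p k * a k / (a k * s + 1) := by
        have : p k * a k / (a k * E + 1) ≤ p k * a k / (a k * s + 1) := by
          apply div_le_div_of_nonneg_left (by positivity) hd2
          nlinarith
        linarith
      -- step 2: rewrite and gain monotonicity
      have h2 : 1 + p k * a k / (a k * s + 1) = (a k * (p k + s) + 1) / (a k * s + 1) := by
        field_simp; ring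
      have h3 : (a k * (p k + s) + 1) / (a k * s + 1)
          ≤ (a kstar * (p k + s) + 1) / (a kstar * s + 1) := by
        rw [div_le_div_iff₀ hd2 hd3]
        nlinarith [mul_nonneg (sub_nonneg.2 (hstar k)) hpk]
      have hx : (0:ℝ) < 1 + p k * a k / (a k * E + 1) := by positivity
      calc Real.logb 2 (1 + p k * a k / (a k * E + 1))
          ≤ Real.logb 2 ((a kstar * (p k + s) + 1) / (a kstar * s + 1)) := by
            apply Real.logb_le_logb_of_le one_lt_two hx
            calc 1 + p k * a k / (a k * E + 1) ≤ _ := h1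
              _ = _ := h2
              _ ≤ _ := h3
        _ = g k.val - g (k.val + 1) := by
            rw [hgdef]
            simp only [ht]
            rw [Real.logb_div (by positivity) (by positivity)]
    calc ∑ k, Real.logb 2 (1 + p k * a k / (a k * ∑ u ∈ Finset.univ.erase k, p u + 1))
        ≤ ∑ k : Fin K, (g k.val - g (k.val + 1)) := Finset.sum_le_sum fun k _ => hterm k
      _ = ∑ i ∈ Finset.range K, (g i - g (i + 1)) := by
          rw [Fin.sum_univ_eq_sum_range (fun i => g i - g (i + 1))]
      _ = g 0 - g K := Finset.sum_range_sub' g K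
      _ = Real.logb 2 (1 + P * a kstar) := by
          rw [hgdef]
          simp only [hS0, hSK]
          rw [mul_zero, zero_add, Real.logb_one, sub_zero, mul_comm, add_comm]
  · rw [Finset.sum_eq_single kstar]
    · have h0 : ∑ u ∈ Finset.univ.erase kstar, (if u = kstar then P else 0) = 0 :=
        Finset.sum_eq_zero fun u hu => if_neg (Finset.ne_of_mem_erase hu)
      rw [h0]
      simp [mul_comm]
    · intro k _ hk
      simp [hk]
    · intro h
      exact absurd (Finset.mem_univ kstar) h
end

section
/- For K = 2 users with gains a_1 ≥ a_2 > 0 and powers p_1, p_2 ≥ 0 with p_1 + p_2 = P, one has log₂(1 + p_1 a_1/(a_1 p_2 + 1)) + log₂(1 + p_2 a_2/(a_2 p_1 + 1)) ≤ log₂(1 + P a_1), with equality when p_1 = P, p_2 = 0. -/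
/-- Two-user opportunistic scheduling: the sum rate is at most
`log₂(1 + P a₁)`, with equality when `p₁ = P` and `p₂ = 0`. -/
theorem two_user_opportunistic (a₁ a₂ p₁ p₂ P : ℝ) (h21 : a₂ ≤ a₁)
    (h2 : 0 < a₂) (hp1 : 0 ≤ p₁) (hp2 : 0 ≤ p₂) (hsum : p₁ + p₂ = P) :
    Real.logb 2 (1 + p₁ * a₁ / (a₁ * p₂ + 1)) +
        Real.logb 2 (1 + p₂ * a₂ / (a₂ * p₁ + 1))
      ≤ Real.logb 2 (1 + P * a₁) ∧
    (p₁ = P → p₂ = 0 →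
      Real.logb 2 (1 + p₁ * a₁ / (a₁ * p₂ + 1)) +
          Real.logb 2 (1 + p₂ * a₂ / (a₂ * p₁ + 1))
        = Real.logb 2 (1 + P * a₁)) := by
  subst hsum
  have h1 : 0 < a₁ := lt_of_lt_of_le h2 h21
  have hd1 : 0 < a₁ * p₂ + 1 := by positivity
  have hd2 : 0 < a₂ * p₁ + 1 := by positivity
  have hx : (1:ℝ) ≤ 1 + p₁ * a₁ / (a₁ * p₂ + 1) := by
    have : 0 ≤ p₁ * a₁ / (a₁ * p₂ + 1) := by positivity
    linarith
  have hy : (1:ℝ) ≤ 1 + p₂ * a₂ / (a₂ * p₁ + 1) := by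
    have : 0 ≤ p₂ * a₂ / (a₂ * p₁ + 1) := by positivity
    linarith
  constructor
  · rw [← Real.logb_mul (by linarith) (by linarith)]
    apply Real.logb_le_logb_of_le (by norm_num) (by nlinarith)
    have key : a₂ * (p₁ + p₂) + 1 ≤ (a₁ * p₂ + 1) * (a₂ * p₁ + 1) := by
      nlinarith [mul_nonneg (mul_nonneg h2.le hp1) (mul_nonneg h1.le hp2),
        mul_le_mul_of_nonneg_right h21 hp2]
    have hP : 0 ≤ (p₁ + p₂) * a₁ := by positivity
    have hprod : (1 + p₁ * a₁ / (a₁ * p₂ + 1)) * (1 + p₂ * a₂ / (a₂ * p₁ + 1))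
        = (1 + (p₁ + p₂) * a₁) * (a₂ * (p₁ + p₂) + 1)
            / ((a₁ * p₂ + 1) * (a₂ * p₁ + 1)) := by
      field_simp
      ring
    rw [hprod, div_le_iff₀ (by positivity)]
    nlinarith [key, hP]
  · intro h1' h2'
    have : p₂ = 0 := h2'
    subst this
    simp
end

section
/- For Y_1, ..., Y_K i.i.d. exponential with mean μ > 0 and P > 0, the ergodic capacity E[log₂(1 + P max_k Y_k)] is nondecreasing in K and, as K → ∞, E[log₂(1 + P max_k Y_k)] − log₂(P μ ln K) → 0. -/
open Finset MeasureTheory ProbabilityTheory Filter Set Real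

lemma my_integral_exp_div (m : ℝ) (hm : 0 < m) (a : ℝ) :
    ∫ x in Set.Ioi a, Real.exp (-(x / m)) = m * Real.exp (-(a / m)) := by
  have h := integral_comp_mul_right_Ioi (fun x => Real.exp (-x)) a (inv_pos.2 hm)
  simp only [smul_eq_mul, inv_inv, integral_exp_neg_Ioi] at h
  calc ∫ x in Set.Ioi a, Real.exp (-(x / m)) = ∫ x in Set.Ioi a, Real.exp (-(x * m⁻¹)) := by
        simp [div_eq_mul_inv]
    _ = m * Real.exp (-(a / m)) := by rw [h]; ring_nf

lemma my_integrableOn_exp_div (m : ℝ) (hm : 0 < m) (a : ℝ) :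
    IntegrableOn (fun x => Real.exp (-(x / m))) (Set.Ioi a) := by
  have := exp_neg_integrableOn_Ioi a (inv_pos.2 hm)
  refine this.congr_fun (fun x _ => ?_) measurableSet_Ioi
  ring_nf

set_option maxHeartbeats 1000000 in
theorem my_aux {Ω : Type*} [MeasurableSpace Ω]
    (μ : Measure Ω) [IsProbabilityMeasure μ] (m : ℝ) (hm : 0 < m)
    (P : ℝ) (hP : 0 < P) (M : ℕ → Ω → ℝ)
    (hMmeas : ∀ K, Measurable (M K))
    (hMsucc : ∀ K ω, M K ω ≤ M (K + 1) ω)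
    (hM0 : ∀ K, ∀ᵐ ω ∂μ, 0 ≤ M K ω)
    (hcdfM : ∀ K y, 0 ≤ y →
      μ {ω | M K ω ≤ y} = ENNReal.ofReal (1 - Real.exp (-y / m)) ^ (K + 1)) :
    Monotone (fun K : ℕ => ∫ ω, Real.logb 2 (1 + P * M K ω) ∂μ) ∧
    Tendsto (fun K : ℕ =>
        (∫ ω, Real.logb 2 (1 + P * M K ω) ∂μ)
          - Real.logb 2 (P * m * Real.log (K + 1)))
      atTop (nhds 0) := by
  have hlog2 : (0:ℝ) < Real.log 2 := Real.log_pos one_lt_two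
  -- tail estimates
  have htail : ∀ K y, 0 ≤ y →
      μ {ω | y < M K ω} = ENNReal.ofReal (1 - (1 - Real.exp (-y / m)) ^ (K + 1)) := by
    intro K y hy
    have hq1 : Real.exp (-y / m) ≤ 1 := by
      rw [Real.exp_le_one_iff]
      have : 0 ≤ y / m := div_nonneg hy hm.le
      rw [neg_div]; linarith
    have hp0 : (0:ℝ) ≤ 1 - Real.exp (-y / m) := by linarith
    have hpn1 : (1 - Real.exp (-y / m)) ^ (K + 1) ≤ 1 := by
      apply pow_le_one₀ hp0; nlinarith [Real.exp_pos (-y / m)]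
    have hset : {ω | y < M K ω} = {ω | M K ω ≤ y}ᶜ := by
      ext ω; simp [not_le]
    rw [hset, prob_compl_eq_one_sub (measurableSet_le (hMmeas K) measurable_const),
      hcdfM K y hy, ← ENNReal.ofReal_pow hp0, ← ENNReal.ofReal_one,
      ← ENNReal.ofReal_sub _ (pow_nonneg hp0 _)]
  -- upper tail bound
  have htail_le : ∀ K y, 0 ≤ y →
      μ {ω | y < M K ω} ≤ ENNReal.ofReal ((K + 1) * Real.exp (-y / m)) := by
    intro K y hy
    rw [htail K y hy]
    apply ENNReal.ofReal_le_ofReal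
    have hq0 : (0:ℝ) ≤ Real.exp (-y / m) := (Real.exp_pos _).le
    have hq1 : Real.exp (-y / m) ≤ 1 := by
      rw [Real.exp_le_one_iff]
      have : 0 ≤ y / m := div_nonneg hy hm.le
      rw [neg_div]; linarith
    have h := one_add_mul_le_pow (a := -Real.exp (-y / m)) (by linarith) (K + 1)
    have h2 : 1 + ((K:ℝ) + 1) * (-Real.exp (-y / m)) ≤ (1 - Real.exp (-y / m)) ^ (K + 1) := by
      calc 1 + ((K:ℝ) + 1) * (-Real.exp (-y / m))
          = 1 + (((K + 1 : ℕ)) : ℝ) * (-Real.exp (-y / m)) := by push_cast; ring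
        _ ≤ (1 + -Real.exp (-y / m)) ^ (K + 1) := h
        _ = (1 - Real.exp (-y / m)) ^ (K + 1) := by ring
    push_cast
    nlinarith
  -- lower cdf bound
  have hcdf_le : ∀ K y, 0 ≤ y →
      (μ {ω | M K ω ≤ y}).toReal ≤ Real.exp (-((K + 1) * Real.exp (-y / m))) := by
    intro K y hy
    have hq0 : (0:ℝ) ≤ Real.exp (-y / m) := (Real.exp_pos _).le
    have hq1 : Real.exp (-y / m) ≤ 1 := by
      rw [Real.exp_le_one_iff]
      have : 0 ≤ y / m := div_nonneg hy hm.le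
      rw [neg_div]; linarith
    have hp0 : (0:ℝ) ≤ 1 - Real.exp (-y / m) := by linarith
    rw [hcdfM K y hy, ← ENNReal.ofReal_pow hp0, ENNReal.toReal_ofReal (pow_nonneg hp0 _)]
    calc (1 - Real.exp (-y / m)) ^ (K + 1)
        ≤ Real.exp (-Real.exp (-y / m)) ^ (K + 1) := by
          apply pow_le_pow_left₀ hp0
          linarith [Real.add_one_le_exp (-Real.exp (-y / m))]
      _ = Real.exp (-((K + 1) * Real.exp (-y / m))) := by
          rw [← Real.exp_nat_mul]; push_cast; ring_nf
  -- expectation bound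
  have hEMlint : ∀ K, ∫⁻ ω, ENNReal.ofReal (M K ω) ∂μ
      ≤ ENNReal.ofReal (m * Real.log (K + 1) + m) := by
    intro K
    set t0 : ℝ := m * Real.log (K + 1) with ht0def
    have hK1 : (1:ℝ) ≤ (K:ℝ) + 1 := by
      have := Nat.cast_nonneg (α := ℝ) K; linarith
    have ht0 : 0 ≤ t0 := mul_nonneg hm.le (Real.log_nonneg hK1)
    rw [lintegral_eq_lintegral_meas_lt μ (hM0 K) (hMmeas K).aemeasurable]
    have hsplit : (Set.Ioi (0:ℝ)) = Set.Ioc 0 t0 ∪ Set.Ioi t0 :=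
      (Set.Ioc_union_Ioi_eq_Ioi ht0).symm
    rw [hsplit, lintegral_union measurableSet_Ioi Set.Ioc_disjoint_Ioi_same]
    have h1 : ∫⁻ t in Set.Ioc 0 t0, μ {a | t < M K a} ≤ ENNReal.ofReal t0 := by
      calc ∫⁻ t in Set.Ioc 0 t0, μ {a | t < M K a}
          ≤ ∫⁻ _ in Set.Ioc 0 t0, 1 := lintegral_mono fun t => prob_le_one
        _ = ENNReal.ofReal t0 := by
            simp [Real.volume_Ioc]
    have h2 : ∫⁻ t in Set.Ioi t0, μ {a | t < M K a} ≤ ENNReal.ofReal m := by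
      have hb : ∫⁻ t in Set.Ioi t0, μ {a | t < M K a}
          ≤ ∫⁻ t in Set.Ioi t0, ENNReal.ofReal (((K:ℝ) + 1) * Real.exp (-(t / m))) := by
        apply lintegral_mono_ae
        filter_upwards [ae_restrict_mem measurableSet_Ioi] with t ht
        have hy : (0:ℝ) ≤ t := le_trans ht0 (le_of_lt ht)
        have := htail_le K t hy
        rw [neg_div] at this
        convert this using 3 <;> push_cast <;> ring
      refine hb.trans ?_
      have hint : IntegrableOn (fun t => ((K:ℝ) + 1) * Real.exp (-(t / m))) (Set.Ioi t0) :=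
        (my_integrableOn_exp_div m hm t0).const_mul _
      rw [← ofReal_integral_eq_lintegral_ofReal hint
        (Filter.Eventually.of_forall fun t => by positivity)]
      apply ENNReal.ofReal_le_ofReal
      rw [MeasureTheory.integral_const_mul, my_integral_exp_div m hm t0]
      have hexp : Real.exp (-(t0 / m)) = ((K:ℝ) + 1)⁻¹ := by
        rw [ht0def, mul_comm, mul_div_assoc, div_self hm.ne', mul_one, Real.exp_neg,
          Real.exp_log (by positivity)]
      rw [hexp]
      rw [mul_comm ((K:ℝ) + 1), mul_assoc, inv_mul_cancel₀ (by positivity), mul_one]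
    calc _ ≤ ENNReal.ofReal t0 + ENNReal.ofReal m := add_le_add h1 h2
      _ = ENNReal.ofReal (t0 + m) := (ENNReal.ofReal_add ht0 hm.le).symm
      _ ≤ _ := le_refl _
  have hMint : ∀ K, Integrable (M K) μ := by
    intro K
    refine ⟨(hMmeas K).aestronglyMeasurable, ?_⟩
    rw [hasFiniteIntegral_iff_ofReal (hM0 K)]
    exact lt_of_le_of_lt (hEMlint K) ENNReal.ofReal_lt_top
  have hEM : ∀ K, ∫ ω, M K ω ∂μ ≤ m * Real.log (K + 1) + m := by
    intro K
    rw [integral_eq_lintegral_of_nonneg_ae (hM0 K) (hMmeas K).aestronglyMeasurable]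
    apply ENNReal.toReal_le_of_le_ofReal
    · have h1 : (0:ℝ) ≤ Real.log ((K:ℝ) + 1) := Real.log_nonneg (by
        have := Nat.cast_nonneg (α := ℝ) K; linarith)
      nlinarith
    · exact hEMlint K
  have hgmeas : ∀ K, AEStronglyMeasurable (fun ω => Real.logb 2 (1 + P * M K ω)) μ := by
    intro K
    have : Measurable (fun ω => Real.logb 2 (1 + P * M K ω)) := by
      simp only [Real.logb]
      exact (Real.measurable_log.comp (measurable_const.add ((hMmeas K).const_mul P))).div_const _
    exact this.aestronglyMeasurable
  have hgint : ∀ K, Integrable (fun ω => Real.logb 2 (1 + P * M K ω)) μ := by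
    intro K
    refine Integrable.mono'
      (g := fun ω => (1 / Real.log 2) * (1 + P * M K ω))
      (((integrable_const (1:ℝ)).add ((hMint K).const_mul P)).const_mul _) (hgmeas K) ?_
    filter_upwards [hM0 K] with ω h0
    have hx : (1:ℝ) ≤ 1 + P * M K ω := by nlinarith
    rw [Real.norm_eq_abs, abs_of_nonneg (Real.logb_nonneg one_lt_two hx)]
    rw [Real.logb, div_le_iff₀ hlog2]
    calc Real.log (1 + P * M K ω) ≤ (1 + P * M K ω) - 1 :=
          Real.log_le_sub_one_of_pos (by linarith)
      _ ≤ 1 / Real.log 2 * (1 + P * M K ω) * Real.log 2 := by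
          have heq : 1 / Real.log 2 * (1 + P * M K ω) * Real.log 2 = 1 + P * M K ω := by
            field_simp
          rw [heq]; linarith
  set Ln : ℕ → ℝ := fun K => Real.log ((K:ℝ) + 1) with hLndef
  set cc : ℕ → ℝ := fun K => 1 + P * m * Ln K with hccdef
  set aa : ℕ → ℝ := fun K => m * (Ln K - Real.log (Ln K)) with haadef
  set Ec : ℕ → ℝ := fun K => ∫ ω, Real.logb 2 (1 + P * M K ω) ∂μ with hEcdef
  -- positivity of Ln for K ≥ 1
  have hLnpos : ∀ K : ℕ, 1 ≤ K → 0 < Ln K := by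
    intro K hK
    apply Real.log_pos
    have : (1:ℝ) ≤ (K:ℝ) := by exact_mod_cast hK
    linarith
  constructor
  · -- Monotonicity
    apply monotone_nat_of_le_succ
    intro K
    apply integral_mono_ae (hgint K) (hgint (K + 1))
    filter_upwards [hM0 K] with ω h0
    have h1 : (0:ℝ) < 1 + P * M K ω := by nlinarith
    exact Real.logb_le_logb_of_le one_lt_two h1 (by nlinarith [hMsucc K ω])
  · -- The limit
    set UU : ℕ → ℝ := fun K =>
      Real.logb 2 (cc K / (P * m * Ln K)) + (P * m / cc K) / Real.log 2 with hUUdef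
    set LL : ℕ → ℝ := fun K =>
      Real.logb 2 (1 + P * aa K) * (1 - 1 / ((K:ℝ) + 1)) - Real.logb 2 (P * m * Ln K)
      with hLLdef
    -- the upper eventual bound
    have hupper : ∀ K : ℕ, 1 ≤ K → Ec K - Real.logb 2 (P * m * Ln K) ≤ UU K := by
      intro K hK
      have hL : 0 < Ln K := hLnpos K hK
      have hcc0 : 0 < cc K := by
        simp only [hccdef]
        nlinarith [mul_pos (mul_pos hP hm) hL]
      have hstep1 : Ec K ≤ Real.logb 2 (cc K) + (P * m / cc K) / Real.log 2 := by
        have hpt : ∀ᵐ ω ∂μ, Real.logb 2 (1 + P * M K ω) ≤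
            (Real.logb 2 (cc K) + (1 / cc K - 1) / Real.log 2)
              + (P / (cc K * Real.log 2)) * M K ω := by
          filter_upwards [hM0 K] with ω h0
          have hx : (0:ℝ) < 1 + P * M K ω := by nlinarith
          have hlogle : Real.log (1 + P * M K ω) ≤
              Real.log (cc K) + ((1 + P * M K ω) / cc K - 1) := by
            have h := Real.log_le_sub_one_of_pos (div_pos hx hcc0)
            rw [Real.log_div hx.ne' hcc0.ne'] at h
            linarith
          have hrhs : (Real.logb 2 (cc K) + (1 / cc K - 1) / Real.log 2)
              + (P / (cc K * Real.log 2)) * M K ω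
              = (Real.log (cc K) + ((1 + P * M K ω) / cc K - 1)) / Real.log 2 := by
            rw [Real.logb]
            field_simp
            ring
          rw [Real.logb, hrhs]
          gcongr
        have hint2 : Integrable (fun ω =>
            (Real.logb 2 (cc K) + (1 / cc K - 1) / Real.log 2)
              + (P / (cc K * Real.log 2)) * M K ω) μ :=
          (integrable_const _).add ((hMint K).const_mul _)
        have h1 : Ec K ≤ (Real.logb 2 (cc K) + (1 / cc K - 1) / Real.log 2)
            + (P / (cc K * Real.log 2)) * ∫ ω, M K ω ∂μ := by
          have := integral_mono_ae (hgint K) hint2 hpt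
          rwa [integral_add (integrable_const _) ((hMint K).const_mul _),
            integral_const, probReal_univ, one_smul,
            MeasureTheory.integral_const_mul] at this
        have h2 : (P / (cc K * Real.log 2)) * ∫ ω, M K ω ∂μ
            ≤ (P / (cc K * Real.log 2)) * (m * Ln K + m) := by
          apply mul_le_mul_of_nonneg_left (hEM K) (by positivity)
        have h3 : (Real.logb 2 (cc K) + (1 / cc K - 1) / Real.log 2)
            + (P / (cc K * Real.log 2)) * (m * Ln K + m)
            = Real.logb 2 (cc K) + (P * m / cc K) / Real.log 2 := by
          simp only [hccdef]
          field_simp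
          ring
        linarith
      have hdivlog : Real.logb 2 (cc K / (P * m * Ln K))
          = Real.logb 2 (cc K) - Real.logb 2 (P * m * Ln K) :=
        Real.logb_div hcc0.ne' (by positivity)
      simp only [hUUdef]
      rw [hdivlog]
      linarith
    -- the lower eventual bound
    have hlower : ∀ K : ℕ, 1 ≤ K → LL K ≤ Ec K - Real.logb 2 (P * m * Ln K) := by
      intro K hK
      have hL : 0 < Ln K := hLnpos K hK
      have hK1pos : (0:ℝ) < (K:ℝ) + 1 := by positivity
      have ha0 : 0 ≤ aa K := by
        have := Real.log_le_sub_one_of_pos hL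
        simp only [haadef]
        nlinarith
      set S : Set Ω := {ω | aa K < M K ω} with hSdef
      have hSm : MeasurableSet S := measurableSet_lt measurable_const (hMmeas K)
      have hle : (fun ω => S.indicator (fun _ => Real.logb 2 (1 + P * aa K)) ω)
          ≤ᵐ[μ] fun ω => Real.logb 2 (1 + P * M K ω) := by
        filter_upwards [hM0 K] with ω h0
        by_cases hω : ω ∈ S
        · rw [Set.indicator_of_mem hω]
          have hlt : aa K < M K ω := hω
          exact Real.logb_le_logb_of_le one_lt_two (by nlinarith) (by nlinarith)
        · rw [Set.indicator_of_notMem hω]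
          exact Real.logb_nonneg one_lt_two (by nlinarith)
      have hEge : Real.logb 2 (1 + P * aa K) * (μ S).toReal ≤ Ec K := by
        have h := integral_mono_ae ((integrable_const _).indicator hSm) (hgint K) hle
        rwa [integral_indicator_const _ hSm, smul_eq_mul, mul_comm] at h
      have hcompl : (μ S).toReal = 1 - (μ {ω | M K ω ≤ aa K}).toReal := by
        have hS : S = {ω | M K ω ≤ aa K}ᶜ := by
          ext ω; simp [hSdef, not_le]
        rw [hS, prob_compl_eq_one_sub (measurableSet_le (hMmeas K) measurable_const),
          ENNReal.toReal_sub_of_le prob_le_one ENNReal.one_ne_top, ENNReal.toReal_one]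
      have hqe : (μ {ω | M K ω ≤ aa K}).toReal ≤ 1 / ((K:ℝ) + 1) := by
        have h := hcdf_le K (aa K) ha0
        have hdiv : aa K / m = Ln K - Real.log (Ln K) := by
          simp only [haadef]
          field_simp
        have hexp : Real.exp (-(aa K / m)) = Ln K / ((K:ℝ) + 1) := by
          rw [hdiv, neg_sub, Real.exp_sub, Real.exp_log hL]
          congr 1
          exact Real.exp_log hK1pos
        rw [neg_div] at h
        rw [hexp] at h
        have harg : ((K:ℝ) + 1) * (Ln K / ((K:ℝ) + 1)) = Ln K := by
          field_simp
        rw [harg] at h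
        have : Real.exp (-Ln K) = 1 / ((K:ℝ) + 1) := by
          rw [Real.exp_neg, Real.exp_log hK1pos, one_div]
        rw [this] at h
        exact h
      have hlogbnn : 0 ≤ Real.logb 2 (1 + P * aa K) :=
        Real.logb_nonneg one_lt_two (by nlinarith)
      have hfinal : Real.logb 2 (1 + P * aa K) * (1 - 1 / ((K:ℝ) + 1)) ≤ Ec K := by
        refine le_trans ?_ hEge
        apply mul_le_mul_of_nonneg_left _ hlogbnn
        rw [hcompl]
        linarith
      simp only [hLLdef]
      linarith
    -- limits of the bounds
    have hNcast : Tendsto (fun K : ℕ => (K:ℝ) + 1) atTop atTop :=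
      tendsto_atTop_add_const_right _ 1 tendsto_natCast_atTop_atTop
    have hLn_top : Tendsto Ln atTop atTop := Real.tendsto_log_atTop.comp hNcast
    have hPmLn_top : Tendsto (fun K => P * m * Ln K) atTop atTop :=
      hLn_top.const_mul_atTop (by positivity)
    have hcc_top : Tendsto cc atTop atTop := by
      simp only [hccdef]
      exact tendsto_atTop_add_const_left _ 1 hPmLn_top
    have hlogb_cont : Tendsto (fun x : ℝ => Real.logb 2 x) (nhds 1) (nhds 0) := by
      have h := ((Real.continuousAt_log one_ne_zero).div_const (Real.log 2)).tendsto
      simp only [Real.log_one, zero_div] at h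
      refine h.congr fun x => ?_
      rw [Real.logb]
    have hinvPmLn : Tendsto (fun K => 1 / (P * m * Ln K)) atTop (nhds 0) := by
      simp only [one_div]
      exact tendsto_inv_atTop_zero.comp hPmLn_top
    have hUU0 : Tendsto UU atTop (nhds 0) := by
      have hterm1 : Tendsto (fun K => Real.logb 2 (cc K / (P * m * Ln K))) atTop (nhds 0) := by
        have hratio : Tendsto (fun K => cc K / (P * m * Ln K)) atTop (nhds 1) := by
          have heq : ∀ᶠ K : ℕ in atTop, 1 / (P * m * Ln K) + 1 = cc K / (P * m * Ln K) := by
            filter_upwards [eventually_ge_atTop 1] with K hK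
            have hL : 0 < Ln K := hLnpos K hK
            simp only [hccdef]
            field_simp [hP.ne', hm.ne', hL.ne']
          have h := hinvPmLn.add (tendsto_const_nhds (x := (1:ℝ)))
          rw [zero_add] at h
          exact Tendsto.congr' heq h
        have := hlogb_cont.comp hratio
        exact this
      have hterm2 : Tendsto (fun K => (P * m / cc K) / Real.log 2) atTop (nhds 0) := by
        have h1 : Tendsto (fun K => P * m / cc K) atTop (nhds 0) := by
          simp only [div_eq_mul_inv]
          have := (tendsto_inv_atTop_zero.comp hcc_top).const_mul (P * m)
          simpa using this
        have := h1.div_const (Real.log 2)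
        simpa using this
      have := hterm1.add hterm2
      rw [add_zero] at this
      exact this
    have hLL0 : Tendsto LL atTop (nhds 0) := by
      have hpart1 : Tendsto (fun K => Real.logb 2 (1 + P * aa K)
          - Real.logb 2 (P * m * Ln K)) atTop (nhds 0) := by
        have hratio : Tendsto (fun K => (1 + P * aa K) / (P * m * Ln K)) atTop (nhds 1) := by
          have hloglog : Tendsto (fun K => Real.log (Ln K) / Ln K) atTop (nhds 0) := by
            have h := (Real.tendsto_pow_log_div_mul_add_atTop 1 0 1 one_ne_zero).comp hLn_top
            refine h.congr fun K => ?_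
            simp [Function.comp]
          have heq : ∀ᶠ K : ℕ in atTop,
              1 / (P * m * Ln K) + 1 - Real.log (Ln K) / Ln K
                = (1 + P * aa K) / (P * m * Ln K) := by
            filter_upwards [eventually_ge_atTop 1] with K hK
            have hL : 0 < Ln K := hLnpos K hK
            simp only [haadef]
            field_simp [hP.ne', hm.ne', hL.ne']
            ring
          have h := (hinvPmLn.add (tendsto_const_nhds (x := (1:ℝ)))).sub hloglog
          rw [zero_add, sub_zero] at h
          exact Tendsto.congr' heq h
        have heq2 : ∀ᶠ K : ℕ in atTop,
            Real.logb 2 ((1 + P * aa K) / (P * m * Ln K))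
              = Real.logb 2 (1 + P * aa K) - Real.logb 2 (P * m * Ln K) := by
          filter_upwards [eventually_ge_atTop 1] with K hK
          have hL : 0 < Ln K := hLnpos K hK
          have ha0 : 0 ≤ aa K := by
            have := Real.log_le_sub_one_of_pos hL
            simp only [haadef]; nlinarith
          exact Real.logb_div (by nlinarith) (by positivity)
        exact Tendsto.congr' heq2 (hlogb_cont.comp hratio)
      have hpart2 : Tendsto (fun K => Real.logb 2 (1 + P * aa K) * (1 / ((K:ℝ) + 1)))
          atTop (nhds 0) := by
        have hLnn : Tendsto (fun K : ℕ => (P * m / Real.log 2) * (Ln K / ((K:ℝ) + 1)))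
            atTop (nhds 0) := by
          have h := (Real.tendsto_pow_log_div_mul_add_atTop 1 0 1 one_ne_zero).comp hNcast
          have h2 : Tendsto (fun K : ℕ => Ln K / ((K:ℝ) + 1)) atTop (nhds 0) := by
            refine h.congr fun K => ?_
            simp [Function.comp, hLndef]
          have := h2.const_mul (P * m / Real.log 2)
          simpa using this
        apply tendsto_of_tendsto_of_tendsto_of_le_of_le' tendsto_const_nhds hLnn
        · filter_upwards [eventually_ge_atTop 1] with K hK
          have hL : 0 < Ln K := hLnpos K hK
          have ha0 : 0 ≤ aa K := by
            have := Real.log_le_sub_one_of_pos hL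
            simp only [haadef]; nlinarith
          have : 0 ≤ Real.logb 2 (1 + P * aa K) :=
            Real.logb_nonneg one_lt_two (by nlinarith)
          positivity
        · filter_upwards [eventually_ge_atTop 2] with K hK
          have hK1 : 1 ≤ K := le_trans (by norm_num) hK
          have hL : 0 < Ln K := hLnpos K hK1
          have hK1pos : (0:ℝ) < (K:ℝ) + 1 := by positivity
          have hLn1 : 1 ≤ Ln K := by
            have h3 : (3:ℝ) ≤ (K:ℝ) + 1 := by
              have : (2:ℝ) ≤ (K:ℝ) := by exact_mod_cast hK
              linarith
            have hlog3 : (1:ℝ) ≤ Real.log 3 := by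
              rw [Real.le_log_iff_exp_le (by norm_num)]
              exact le_trans Real.exp_one_lt_d9.le (by norm_num)
            calc (1:ℝ) ≤ Real.log 3 := hlog3
              _ ≤ Ln K := Real.log_le_log (by norm_num) h3
          have hale : aa K ≤ m * Ln K := by
            have hlogLn_nn : 0 ≤ Real.log (Ln K) := Real.log_nonneg hLn1
            simp only [haadef]
            nlinarith
          have ha0 : 0 ≤ aa K := by
            have := Real.log_le_sub_one_of_pos hL
            simp only [haadef]; nlinarith
          have hbound : Real.logb 2 (1 + P * aa K) ≤ P * m * Ln K / Real.log 2 := by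
            rw [Real.logb, div_le_div_iff_of_pos_right hlog2]
            calc Real.log (1 + P * aa K) ≤ (1 + P * aa K) - 1 :=
                Real.log_le_sub_one_of_pos (by nlinarith)
              _ = P * aa K := by ring
              _ ≤ P * m * Ln K := by nlinarith
          calc Real.logb 2 (1 + P * aa K) * (1 / ((K:ℝ) + 1))
              ≤ (P * m * Ln K / Real.log 2) * (1 / ((K:ℝ) + 1)) := by
                apply mul_le_mul_of_nonneg_right hbound (by positivity)
            _ = (P * m / Real.log 2) * (Ln K / ((K:ℝ) + 1)) := by
                field_simp
      have heq3 : LL = fun K => (Real.logb 2 (1 + P * aa K) - Real.logb 2 (P * m * Ln K))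
          - Real.logb 2 (1 + P * aa K) * (1 / ((K:ℝ) + 1)) := by
        funext K
        simp only [hLLdef]
        ring
      rw [heq3]
      have := hpart1.sub hpart2
      rw [sub_zero] at this
      exact this
    -- squeeze
    apply tendsto_of_tendsto_of_tendsto_of_le_of_le' hLL0 hUU0
    · filter_upwards [eventually_ge_atTop 1] with K hK
      exact hlower K hK
    · filter_upwards [eventually_ge_atTop 1] with K hK
      exact hupper K hK

/-- Multiuser diversity: the ergodic capacity
`E[log₂(1 + P maxₖ Yₖ)]` of the best of `K` i.i.d. exponential channels is
nondecreasing in `K` and grows like `log₂(P m ln K)` as `K → ∞`. -/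
theorem ergodic_capacity_multiuser_diversity {Ω : Type*} [MeasurableSpace Ω]
    (μ : Measure Ω) [IsProbabilityMeasure μ] (m : ℝ) (hm : 0 < m)
    (P : ℝ) (hP : 0 < P) (Y : ℕ → Ω → ℝ) (hmeas : ∀ k, Measurable (Y k))
    (hindep : iIndepFun Y μ)
    (hcdf : ∀ k y, 0 ≤ y → μ {ω | Y k ω ≤ y} = ENNReal.ofReal (1 - Real.exp (-y / m)))
    (hcdf0 : ∀ k y, y < 0 → μ {ω | Y k ω ≤ y} = 0) :
    Monotone (fun K : ℕ => ∫ ω, Real.logb 2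
        (1 + P * (Finset.range (K + 1)).sup' Finset.nonempty_range_add_one
          (fun k => Y k ω)) ∂μ) ∧
    Tendsto (fun K : ℕ =>
        (∫ ω, Real.logb 2 (1 + P * (Finset.range (K + 1)).sup'
            Finset.nonempty_range_add_one (fun k => Y k ω)) ∂μ)
          - Real.logb 2 (P * m * Real.log (K + 1)))
      atTop (nhds 0) := by
  set M : ℕ → Ω → ℝ := fun K ω =>
    (Finset.range (K + 1)).sup' Finset.nonempty_range_add_one (fun k => Y k ω) with hMdef
  have hMeq : ∀ K, M K = (Finset.range (K + 1)).sup' Finset.nonempty_range_add_one Y := by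
    intro K
    funext ω
    rw [Finset.sup'_apply]
  have hMmeas : ∀ K, Measurable (M K) := by
    intro K
    rw [hMeq K]
    exact Finset.measurable_sup' Finset.nonempty_range_add_one (fun k _ => hmeas k)
  have hMsucc : ∀ K ω, M K ω ≤ M (K + 1) ω := by
    intro K ω
    apply Finset.sup'_le
    intro b hb
    exact Finset.le_sup' (f := fun k => Y k ω)
      (Finset.mem_range.mpr (by have := Finset.mem_range.mp hb; omega))
  have hM0 : ∀ K, ∀ᵐ ω ∂μ, 0 ≤ M K ω := by
    intro K
    have h0 : μ {ω | Y 0 ω ≤ 0} = 0 := by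
      rw [hcdf 0 0 le_rfl]
      simp
    have hae : ∀ᵐ ω ∂μ, 0 < Y 0 ω := by
      rw [ae_iff]
      convert h0 using 2
      ext ω
      simp [not_lt]
    filter_upwards [hae] with ω hω
    calc (0:ℝ) ≤ Y 0 ω := hω.le
      _ ≤ M K ω := Finset.le_sup' (f := fun k => Y k ω)
          (Finset.mem_range.mpr (Nat.succ_pos K))
  have hcdfM : ∀ K y, 0 ≤ y →
      μ {ω | M K ω ≤ y} = ENNReal.ofReal (1 - Real.exp (-y / m)) ^ (K + 1) := by
    intro K y hy
    have hset : {ω | M K ω ≤ y} = ⋂ k ∈ Finset.range (K + 1), Y k ⁻¹' Set.Iic y := by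
      ext ω
      simp [hMdef, Finset.sup'_le_iff]
    rw [hset, iIndepFun_iff_measure_inter_preimage_eq_mul.mp hindep (Finset.range (K + 1))
      (sets := fun _ => Set.Iic y) (fun i _ => measurableSet_Iic)]
    have heach : ∀ i, μ (Y i ⁻¹' Set.Iic y) = ENNReal.ofReal (1 - Real.exp (-y / m)) := by
      intro i
      rw [show Y i ⁻¹' Set.Iic y = {ω | Y i ω ≤ y} from rfl]
      exact hcdf i y hy
    rw [Finset.prod_congr rfl (fun i _ => heach i), Finset.prod_const, Finset.card_range]
  exact my_aux μ m hm P hP M hMmeas hMsucc hM0 hcdfM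
end
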